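/- Fix τ ∈ (0,1) and Δ_τ, μ_τ > 0. Let x, θ*, F_x, and ∇f_τ(θ) = E[(F_x(xᵀθ − xᵀθ*) − τ)x] be as in the online quantile regression model, with E[x xᵀ] = I_d, E[‖x‖⁴] < ∞, F_x(0) = τ, and F_x(t) − F_x(t′) ≥ μ_τ(t − t′) for −Δ_τ ≤ t′ ≤ t ≤ Δ_τ. Then for all θ ≠ θ*: ⟨θ − θ*, ∇f_τ(θ)⟩ ≥ (9·μ_τΔ_τ/(32·E[‖x‖⁴]))·‖θ − θ*‖ − μ_τΔ_τ². In particular, ⟨θ − θ*, ∇f_τ(θ)⟩ ≥ (9μ_τΔ_τ/(64E[‖x‖⁴]))·‖θ−θ*‖ whenever ‖θ − θ*‖ ≥ 64E[‖x‖⁴]Δ_τ/9. -/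

import Mathlib

/-!
Write `g = θ - θs` and `t = ⟪x, g⟫`, so that `⟪g, ∇f_τ(θ)⟫ = E[(F_x(t) - F_x(0)) t]`.
Monotonicity and the growth condition at `±Δτ` give the pointwise bound
`(F_x(t) - F_x(0)) t ≥ μτ Δτ (|t| - Δτ)`, so it remains to bound `E|t|` from below.
Integrating `t² ≤ c |t| + t⁴ / c²` with `c = 2 M ‖g‖`, where `M = E‖x‖⁴`, and using isotropy
`E t² = ‖g‖²` together with `E t⁴ ≤ M ‖g‖⁴` gives `E|t| ≥ 3 ‖g‖ / (8 M) ≥ 9 ‖g‖ / (32 M)`;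
here `M ≥ 1` because `1 = (E⟪x, u⟫²)² ≤ E⟪x, u⟫⁴ ≤ M` for a unit vector `u`.
-/

open Real MeasureTheory RealInnerProductSpace

section Moments

variable {Ω : Type*} [MeasurableSpace Ω] {μ : Measure Ω}

lemma sq_le_mul_abs_add_pow_four_div_sq (y : ℝ) {c : ℝ} (hc : 0 < c) :
    y ^ 2 ≤ c * |y| + y ^ 4 / c ^ 2 := by
  have ha := abs_nonneg y
  rw [← sq_abs y, show y ^ 4 = |y| ^ 4 from (Even.pow_abs ⟨2, rfl⟩ y).symm]
  rcases le_total |y| c with h | h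
  · have : 0 ≤ |y| ^ 4 / c ^ 2 := by positivity
    nlinarith
  · have : |y| ^ 2 ≤ |y| ^ 4 / c ^ 2 := by
      rw [le_div_iff₀ (by positivity)]
      nlinarith [pow_le_pow_left₀ hc.le h 2]
    nlinarith

lemma integral_sq_le_mul_integral_abs_add {Y : Ω → ℝ} {c : ℝ} (hc : 0 < c)
    (h1 : Integrable (fun ω => |Y ω|) μ) (h4 : Integrable (fun ω => Y ω ^ 4) μ) :
    ∫ ω, Y ω ^ 2 ∂μ ≤ c * ∫ ω, |Y ω| ∂μ + (∫ ω, Y ω ^ 4 ∂μ) / c ^ 2 := by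
  rw [← integral_const_mul, ← integral_div, ← integral_add (h1.const_mul c) (h4.div_const _)]
  exact integral_mono_of_nonneg (ae_of_all _ fun ω => sq_nonneg _)
    ((h1.const_mul c).add (h4.div_const _))
    (ae_of_all _ fun ω => sq_le_mul_abs_add_pow_four_div_sq (Y ω) hc)

lemma sq_integral_sq_le_integral_pow_four [IsProbabilityMeasure μ] {Y : Ω → ℝ}
    (h4 : Integrable (fun ω => Y ω ^ 4) μ) :
    (∫ ω, Y ω ^ 2 ∂μ) ^ 2 ≤ ∫ ω, Y ω ^ 4 ∂μ := by
  set s := ∫ ω, Y ω ^ 2 ∂μ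
  have hs : 0 ≤ s := integral_nonneg fun ω => sq_nonneg _
  have h : ∫ ω, 2 * s * Y ω ^ 2 ∂μ ≤ ∫ ω, (s ^ 2 + Y ω ^ 4) ∂μ :=
    integral_mono_of_nonneg (ae_of_all _ fun ω => by positivity)
      ((integrable_const _).add h4)
      (ae_of_all _ fun ω => by nlinarith [sq_nonneg (s - Y ω ^ 2)])
  rw [integral_const_mul, integral_add (integrable_const _) h4, integral_const] at h
  simp only [probReal_univ, one_smul] at h
  nlinarith

lemma three_mul_le_eight_mul_integral_abs {Y : Ω → ℝ} {σ M : ℝ} (hM : 1 ≤ M)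
    (h1 : Integrable (fun ω => |Y ω|) μ) (h4 : Integrable (fun ω => Y ω ^ 4) μ)
    (h2 : ∫ ω, Y ω ^ 2 ∂μ = σ ^ 2) (hM4 : ∫ ω, Y ω ^ 4 ∂μ ≤ M * σ ^ 4) :
    3 * σ ≤ 8 * M * ∫ ω, |Y ω| ∂μ := by
  have hA : 0 ≤ ∫ ω, |Y ω| ∂μ := integral_nonneg fun ω => abs_nonneg _
  rcases le_or_gt σ 0 with hσ | hσ
  · nlinarith
  have h := integral_sq_le_mul_integral_abs_add (c := 2 * M * σ) (by positivity) h1 h4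
  have hquarter : (∫ ω, Y ω ^ 4 ∂μ) / (2 * M * σ) ^ 2 ≤ σ ^ 2 / 4 := by
    rw [div_le_iff₀ (by positivity)]
    calc ∫ ω, Y ω ^ 4 ∂μ ≤ M * σ ^ 4 := hM4
      _ ≤ M * M * σ ^ 4 := by gcongr; nlinarith
      _ = σ ^ 2 / 4 * (2 * M * σ) ^ 2 := by ring
  rw [h2] at h
  nlinarith

lemma integrable_of_integrable_norm_pow_four [IsFiniteMeasure μ] {E : Type*}
    [NormedAddCommGroup E] {x : Ω → E} (hx : AEStronglyMeasurable x μ)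
    (h4 : Integrable (fun ω => ‖x ω‖ ^ 4) μ) : Integrable x μ :=
  (integrable_norm_iff hx).1 (by simpa using integrable_norm_pow_of_le hx (p := 1) (by norm_num) h4)

end Moments

lemma mul_abs_sub_mul_le_sub_mul {φ : ℝ → ℝ} {a Δ : ℝ} (ha : 0 ≤ a) (hΔ : 0 ≤ Δ)
    (hmono : Monotone φ) (hright : a ≤ φ Δ - φ 0) (hleft : a ≤ φ 0 - φ (-Δ)) (s : ℝ) :
    a * |s| - a * Δ ≤ (φ s - φ 0) * s := by
  rcases le_total Δ s with h | h
  · have := hmono h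
    rw [abs_of_nonneg (by linarith)]
    nlinarith
  rcases le_total s (-Δ) with h' | h'
  · have := hmono h'
    rw [abs_of_nonpos (by linarith)]
    nlinarith
  have hlhs : a * |s| - a * Δ ≤ 0 := by
    nlinarith [abs_le.2 ⟨h', h⟩]
  have hrhs : 0 ≤ (φ s - φ 0) * s := by
    rcases le_total 0 s with hs | hs
    · exact mul_nonneg (sub_nonneg.2 (hmono hs)) hs
    · exact mul_nonneg_of_nonpos_of_nonpos (sub_nonpos.2 (hmono hs)) hs
  linarith

section InnerMoments

variable {Ω E : Type*} [MeasurableSpace Ω] {μ : Measure Ω}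
  [NormedAddCommGroup E] [InnerProductSpace ℝ E] {x : Ω → E}

lemma integrable_inner_pow_four (hx : AEStronglyMeasurable x μ)
    (h4 : Integrable (fun ω => ‖x ω‖ ^ 4) μ) (g : E) :
    Integrable (fun ω => ⟪x ω, g⟫ ^ 4) μ := by
  refine (h4.mul_const (‖g‖ ^ 4)).mono' ((hx.inner aestronglyMeasurable_const).pow 4)
    (ae_of_all _ fun ω => ?_)
  rw [norm_pow, ← mul_pow]
  exact pow_le_pow_left₀ (norm_nonneg _) (norm_inner_le_norm _ _) 4

lemma integral_inner_pow_four_le (h4 : Integrable (fun ω => ‖x ω‖ ^ 4) μ) (g : E) :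
    ∫ ω, ⟪x ω, g⟫ ^ 4 ∂μ ≤ (∫ ω, ‖x ω‖ ^ 4 ∂μ) * ‖g‖ ^ 4 := by
  rw [← integral_mul_const]
  refine integral_mono_of_nonneg (ae_of_all _ fun ω => by positivity) (h4.mul_const _)
    (ae_of_all _ fun ω => ?_)
  change ⟪x ω, g⟫ ^ 4 ≤ ‖x ω‖ ^ 4 * ‖g‖ ^ 4
  rw [← mul_pow, ← Even.pow_abs ⟨2, rfl⟩]
  exact pow_le_pow_left₀ (abs_nonneg _) (abs_real_inner_le_norm _ _) 4

variable [IsProbabilityMeasure μ]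

lemma one_le_integral_norm_pow_four [Nontrivial E] (hx : AEStronglyMeasurable x μ)
    (h4 : Integrable (fun ω => ‖x ω‖ ^ 4) μ) (hiso : ∀ u, ∫ ω, ⟪x ω, u⟫ ^ 2 ∂μ = ‖u‖ ^ 2) :
    1 ≤ ∫ ω, ‖x ω‖ ^ 4 ∂μ := by
  obtain ⟨u, hu⟩ := exists_norm_eq E zero_le_one
  have h := (sq_integral_sq_le_integral_pow_four (integrable_inner_pow_four hx h4 u)).trans
    (integral_inner_pow_four_le h4 u)
  rwa [hiso u, hu, one_pow, one_pow, one_pow, mul_one] at h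

lemma three_mul_norm_le_eight_mul_integral_abs_inner [Nontrivial E]
    (hx : AEStronglyMeasurable x μ) (h4 : Integrable (fun ω => ‖x ω‖ ^ 4) μ)
    (hiso : ∀ u, ∫ ω, ⟪x ω, u⟫ ^ 2 ∂μ = ‖u‖ ^ 2) (g : E) :
    3 * ‖g‖ ≤ 8 * (∫ ω, ‖x ω‖ ^ 4 ∂μ) * ∫ ω, |⟪x ω, g⟫| ∂μ :=
  three_mul_le_eight_mul_integral_abs (one_le_integral_norm_pow_four hx h4 hiso)
    ((integrable_of_integrable_norm_pow_four hx h4).inner_const g).abs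
    (integrable_inner_pow_four hx h4 g) (hiso g) (integral_inner_pow_four_le h4 g)

lemma mul_integral_abs_inner_sub_le_inner_integral_smul [CompleteSpace E] {ψ : Ω → ℝ} {a b : ℝ}
    (hx1 : Integrable x μ) (hψx : AEStronglyMeasurable (fun ω => ψ ω • x ω) μ)
    (hψ : ∀ ω, ‖ψ ω‖ ≤ 1) (g : E) (h : ∀ ω, a * |⟪x ω, g⟫| - b ≤ ψ ω * ⟪x ω, g⟫) :
    a * ∫ ω, |⟪x ω, g⟫| ∂μ - b ≤ ⟪g, ∫ ω, ψ ω • x ω ∂μ⟫ := by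
  have hA := (hx1.inner_const g).abs.const_mul a
  have hint : Integrable (fun ω => ψ ω • x ω) μ :=
    hx1.norm.mono' hψx (ae_of_all _ fun ω => by
      rw [norm_smul]; exact mul_le_of_le_one_left (norm_nonneg _) (hψ ω))
  calc a * ∫ ω, |⟪x ω, g⟫| ∂μ - b = ∫ ω, (a * |⟪x ω, g⟫| - b) ∂μ := by
        rw [integral_sub hA (integrable_const b), integral_const_mul, integral_const,
          probReal_univ, one_smul]
    _ ≤ ∫ ω, ⟪g, ψ ω • x ω⟫ ∂μ :=
        integral_mono (hA.sub (integrable_const b)) (hint.const_inner g) fun ω => by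
          simpa only [real_inner_smul_right, real_inner_comm] using h ω
    _ = _ := integral_inner hint g

end InnerMoments

theorem stmt_17_general {Ω : Type*} [MeasurableSpace Ω] (μ : Measure Ω) [IsProbabilityMeasure μ]
    (d : ℕ) (x : Ω → EuclideanSpace ℝ (Fin d)) (θs : EuclideanSpace ℝ (Fin d))
    (F : EuclideanSpace ℝ (Fin d) → ℝ → ℝ)
    (τ Δτ μτ : ℝ)
    (hΔτ : 0 < Δτ) (hμτ : 0 < μτ)
    (hmx : Measurable x)
    (hiso : ∀ u v : EuclideanSpace ℝ (Fin d), ∫ ω, ⟪x ω, u⟫ * ⟪x ω, v⟫ ∂μ = ⟪u, v⟫)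
    (hint4 : Integrable (fun ω => ‖x ω‖ ^ 4) μ)
    (hF01 : ∀ v t, F v t ∈ Set.Icc (0 : ℝ) 1)
    (hFmono : ∀ v, Monotone (F v))
    (hF0 : ∀ v, F v 0 = τ)
    (hFsm : ∀ v, ∀ t' t : ℝ, -Δτ ≤ t' → t' ≤ t → t ≤ Δτ → μτ * (t - t') ≤ F v t - F v t')
    (hmeasF : ∀ θ : EuclideanSpace ℝ (Fin d),
      AEStronglyMeasurable (fun ω => (F (x ω) (⟪x ω, θ⟫ - ⟪x ω, θs⟫) - τ) • x ω) μ)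
    (θ : EuclideanSpace ℝ (Fin d)) (hθ : θ ≠ θs) :
    (9 * μτ * Δτ / (32 * ∫ ω, ‖x ω‖ ^ 4 ∂μ) * ‖θ - θs‖ - μτ * Δτ ^ 2 ≤
      ⟪θ - θs, ∫ ω, (F (x ω) (⟪x ω, θ⟫ - ⟪x ω, θs⟫) - τ) • x ω ∂μ⟫) ∧
    (64 * (∫ ω, ‖x ω‖ ^ 4 ∂μ) * Δτ / 9 ≤ ‖θ - θs‖ →
      9 * μτ * Δτ / (64 * ∫ ω, ‖x ω‖ ^ 4 ∂μ) * ‖θ - θs‖ ≤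
        ⟪θ - θs, ∫ ω, (F (x ω) (⟪x ω, θ⟫ - ⟪x ω, θs⟫) - τ) • x ω ∂μ⟫) := by
  set g := θ - θs
  set M := ∫ ω, ‖x ω‖ ^ 4 ∂μ
  set A := ∫ ω, |⟪x ω, g⟫| ∂μ
  set I := ⟪g, ∫ ω, (F (x ω) (⟪x ω, θ⟫ - ⟪x ω, θs⟫) - τ) • x ω ∂μ⟫
  have hx : AEStronglyMeasurable x μ := hmx.aestronglyMeasurable
  have hx1 := integrable_of_integrable_norm_pow_four hx hint4
  have : Nontrivial (EuclideanSpace ℝ (Fin d)) := nontrivial_of_ne θ θs hθ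
  have hiso' (u : EuclideanSpace ℝ (Fin d)) : ∫ ω, ⟪x ω, u⟫ ^ 2 ∂μ = ‖u‖ ^ 2 := by
    simpa [sq, real_inner_self_eq_norm_sq] using hiso u u
  have hM : 1 ≤ M := one_le_integral_norm_pow_four hx hint4 hiso'
  have hanti : 3 * ‖g‖ ≤ 8 * M * A :=
    three_mul_norm_le_eight_mul_integral_abs_inner hx hint4 hiso' g
  have hgrad : μτ * Δτ * A - μτ * Δτ * Δτ ≤ I := by
    refine mul_integral_abs_inner_sub_le_inner_integral_smul hx1 (hmeasF θ) (fun ω => ?_) g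
      fun ω => ?_
    · rw [← hF0 (x ω), ← dist_eq_norm]
      exact Real.dist_le_of_mem_Icc_01 (hF01 _ _) (hF01 _ _)
    · rw [← inner_sub_right, ← hF0 (x ω)]
      exact mul_abs_sub_mul_le_sub_mul (by positivity) hΔτ.le (hFmono (x ω))
        (by simpa using hFsm (x ω) 0 Δτ (by linarith) hΔτ.le le_rfl)
        (by simpa using hFsm (x ω) (-Δτ) 0 le_rfl (by linarith) hΔτ.le) _
  have hA : 0 ≤ A := integral_nonneg fun ω => abs_nonneg _
  have hlin : 9 * μτ * Δτ / (32 * M) * ‖g‖ ≤ μτ * Δτ * A := by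
    rw [div_mul_eq_mul_div, div_le_iff₀ (by linarith)]
    nlinarith [mul_le_mul_of_nonneg_left hanti (by positivity : 0 ≤ μτ * Δτ),
      mul_nonneg (mul_nonneg hμτ.le hΔτ.le) (mul_nonneg (zero_le_one.trans hM) hA)]
  refine ⟨by linarith, fun hfar => ?_⟩
  have hΔ2 : μτ * Δτ ^ 2 ≤ 9 * μτ * Δτ / (64 * M) * ‖g‖ := by
    rw [div_mul_eq_mul_div, le_div_iff₀ (by linarith)]
    nlinarith [mul_le_mul_of_nonneg_left hfar (by positivity : 0 ≤ μτ * Δτ)]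
  have hhalf : 9 * μτ * Δτ / (32 * M) * ‖g‖ = 2 * (9 * μτ * Δτ / (64 * M) * ‖g‖) := by ring
  linarith

theorem stmt_17 {Ω : Type*} [MeasurableSpace Ω] (μ : Measure Ω) [IsProbabilityMeasure μ]
    (d : ℕ) (x : Ω → EuclideanSpace ℝ (Fin d)) (θs : EuclideanSpace ℝ (Fin d))
    (F : EuclideanSpace ℝ (Fin d) → ℝ → ℝ)
    (τ Δτ μτ : ℝ)
    (hτ1 : 0 < τ) (hτ2 : τ < 1) (hΔτ : 0 < Δτ) (hμτ : 0 < μτ)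
    (hmx : Measurable x)
    (hiso : ∀ u v : EuclideanSpace ℝ (Fin d), ∫ ω, ⟪x ω, u⟫ * ⟪x ω, v⟫ ∂μ = ⟪u, v⟫)
    (hint4 : Integrable (fun ω => ‖x ω‖ ^ 4) μ)
    (hF01 : ∀ v t, F v t ∈ Set.Icc (0 : ℝ) 1)
    (hFmono : ∀ v, Monotone (F v))
    (hF0 : ∀ v, F v 0 = τ)
    (hFsm : ∀ v, ∀ t' t : ℝ, -Δτ ≤ t' → t' ≤ t → t ≤ Δτ → μτ * (t - t') ≤ F v t - F v t')
    (hmeasF : ∀ θ : EuclideanSpace ℝ (Fin d),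
      AEStronglyMeasurable (fun ω => (F (x ω) (⟪x ω, θ⟫ - ⟪x ω, θs⟫) - τ) • x ω) μ)
    (θ : EuclideanSpace ℝ (Fin d)) (hθ : θ ≠ θs) :
    (9 * μτ * Δτ / (32 * ∫ ω, ‖x ω‖ ^ 4 ∂μ) * ‖θ - θs‖ - μτ * Δτ ^ 2 ≤
      ⟪θ - θs, ∫ ω, (F (x ω) (⟪x ω, θ⟫ - ⟪x ω, θs⟫) - τ) • x ω ∂μ⟫) ∧
    (64 * (∫ ω, ‖x ω‖ ^ 4 ∂μ) * Δτ / 9 ≤ ‖θ - θs‖ →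
      9 * μτ * Δτ / (64 * ∫ ω, ‖x ω‖ ^ 4 ∂μ) * ‖θ - θs‖ ≤
        ⟪θ - θs, ∫ ω, (F (x ω) (⟪x ω, θ⟫ - ⟪x ω, θs⟫) - τ) • x ω ∂μ⟫) :=
  stmt_17_general μ d x θs F τ Δτ μτ hΔτ hμτ hmx hiso hint4 hF01 hFmono hF0 hFsm hmeasF θ hθ
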